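/- arXiv:1209.4820 — 2 statements merged into one kernel-verified Lean document; each statement's English description precedes it below -/
import Mathlib

section
/- Let F be a finite field, n a positive integer, L, R ∈ (F \ {0})^n, and A, Ã, B, B̃ ∈ F^n with ⟨A,B⟩ + ⟨Ã,B̃⟩ = 0. Define V_i = L_i⁻¹·A_i, X_i = V_i·B_i, R' = R + X; assume all coordinates of R' are nonzero. Define Ṽ_i = (R'_i)⁻¹·B̃_i, X̃_i = Ṽ_i·Ã_i, and L' = L + X̃. Then ⟨L', R'⟩ = ⟨L, R⟩. -/
/-!
Each half-step of the refresh adds to one share a correction divided by the other share, so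
multiplying back by that share cancels the division: updating `R` adds `⟨A, B⟩` to `⟨L, R⟩`,
updating `L` then adds `⟨Ã, B̃⟩`, and the two contributions cancel by assumption.
-/

theorem Finset.sum_mul_add_inv_mul {ι K : Type*} [Field K] (s : Finset ι) (u w c : ι → K)
    (hu : ∀ i ∈ s, u i ≠ 0) :
    ∑ i ∈ s, u i * (w i + (u i)⁻¹ * c i) = ∑ i ∈ s, u i * w i + ∑ i ∈ s, c i := by
  rw [← Finset.sum_add_distrib]
  refine Finset.sum_congr rfl fun i hi => ?_
  rw [mul_add, mul_inv_cancel_left₀ (hu i hi)]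

theorem stmt_1_general {F : Type*} [Field F] {n : ℕ}
    (L R A At B Bt : Fin n → F)
    (hL : ∀ i, L i ≠ 0)
    (horth : (∑ i, A i * B i) + (∑ i, At i * Bt i) = 0)
    (V X R' Vt Xt L' : Fin n → F)
    (hV : ∀ i, V i = (L i)⁻¹ * A i)
    (hX : ∀ i, X i = V i * B i)
    (hR' : R' = R + X)
    (hR'ne : ∀ i, R' i ≠ 0)
    (hVt : ∀ i, Vt i = (R' i)⁻¹ * Bt i)
    (hXt : ∀ i, Xt i = Vt i * At i)
    (hL' : L' = L + Xt) :
    (∑ i, L' i * R' i) = (∑ i, L i * R i) := by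
  have hR'_eq : ∀ i, R' i = R i + (L i)⁻¹ * (A i * B i) := fun i => by
    rw [hR', Pi.add_apply, hX, hV, mul_assoc]
  have hL'_eq : ∀ i, L' i = L i + (R' i)⁻¹ * (At i * Bt i) := fun i => by
    rw [hL', Pi.add_apply, hXt, hVt, mul_assoc, mul_comm (Bt i)]
  calc ∑ i, L' i * R' i
      = ∑ i, R' i * (L i + (R' i)⁻¹ * (At i * Bt i)) := by simp only [hL'_eq, mul_comm]
    _ = ∑ i, L i * R' i + ∑ i, At i * Bt i := by
        rw [Finset.sum_mul_add_inv_mul _ _ _ _ fun i _ => hR'ne i]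
        simp only [mul_comm]
    _ = ∑ i, L i * (R i + (L i)⁻¹ * (A i * B i)) + ∑ i, At i * Bt i := by simp only [hR'_eq]
    _ = ∑ i, L i * R i := by
        rw [Finset.sum_mul_add_inv_mul _ _ _ _ fun i _ => hL i, add_assoc, horth, add_zero]

theorem stmt_1 {F : Type*} [Field F] [Fintype F] {n : ℕ} (hn : 0 < n)
    (L R A At B Bt : Fin n → F)
    (hL : ∀ i, L i ≠ 0) (hR : ∀ i, R i ≠ 0)
    (horth : (∑ i, A i * B i) + (∑ i, At i * Bt i) = 0)
    (V X R' Vt Xt L' : Fin n → F)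
    (hV : ∀ i, V i = (L i)⁻¹ * A i)
    (hX : ∀ i, X i = V i * B i)
    (hR' : R' = R + X)
    (hR'ne : ∀ i, R' i ≠ 0)
    (hVt : ∀ i, Vt i = (R' i)⁻¹ * Bt i)
    (hXt : ∀ i, Xt i = Vt i * At i)
    (hL' : L' = L + Xt) :
    (∑ i, L' i * R' i) = (∑ i, L i * R i) :=
  stmt_1_general L R A At B Bt hL horth V X R' Vt Xt L' hV hX hR' hR'ne hVt hXt hL'
end

section
/- Let F be a finite field, n ≥ 1, and L, R ∈ (F \ {0})^n. Consider the joint distribution of (L, R, A, B, V, X, R') in the Refresh protocol's first phase, where (A,B) is uniform on (F\{0})^n × F^n, V_i = L_i⁻¹A_i, X_i = V_iB_i, R' = R + X; and in the reconstructor, where R' is uniform on F^n, V is uniform on (F\{0})^n independent of R', A_i = V_iL_i, X = R' − R, B_i = V_i⁻¹X_i. These two joint distributions are equal. -/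
/-!
The refresh phase is a reparametrisation of the reconstructor: the map
`(A, B) ↦ (V, R') = (L⁻¹ A, R + L⁻¹ A B)` is a bijection of `(F \ {0})ⁿ × Fⁿ` onto itself,
with inverse `(V, R') ↦ (V L, V⁻¹ (R' - R))`, and it carries the refresh transcript to the
reconstructor's transcript. A bijection pushes a uniform distribution to a uniform one.
-/

namespace PMF

variable {α β : Type*}

theorem map_congr_of_mem_support {p : PMF α} {f g : α → β}
    (h : ∀ a ∈ p.support, f a = g a) : p.map f = p.map g := by
  ext b
  simp only [map_apply]
  refine tsum_congr fun a => ?_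
  by_cases ha : a ∈ p.support
  · rw [h a ha]
  · simp [(mem_support_iff p a).not_left.mp ha]

theorem map_uniformOfFinset_of_bijOn {s : Finset α} {t : Finset β} (hs : s.Nonempty)
    (ht : t.Nonempty) {f : α → β} (hf : Set.BijOn f s t) :
    (uniformOfFinset s hs).map f = uniformOfFinset t ht := by
  classical
  ext b
  rw [← toOuterMeasure_apply_singleton, toOuterMeasure_map_apply,
    toOuterMeasure_uniformOfFinset_apply, uniformOfFinset_apply, ← hf.finsetCard_eq]
  split_ifs with hb
  · obtain ⟨a, ha, rfl⟩ := hf.surjOn hb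
    have hfiber : {x ∈ s | x ∈ f ⁻¹' {f a}} = {a} :=
      Finset.eq_singleton_iff_unique_mem.2
        ⟨by simpa using ha, fun x hx => by
          simp only [Finset.mem_filter, Set.mem_preimage, Set.mem_singleton_iff] at hx
          exact hf.injOn hx.1 ha hx.2⟩
    rw [hfiber, Finset.card_singleton, Nat.cast_one, one_div]
  · have hfiber : {x ∈ s | x ∈ f ⁻¹' {b}} = ∅ :=
      Finset.filter_eq_empty_iff.2 fun x hx hfx => hb (hfx ▸ hf.mapsTo hx)
    rw [hfiber, Finset.card_empty, Nat.cast_zero, ENNReal.zero_div]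

end PMF

namespace Refresh

variable {ι F : Type*} [Field F]

def refreshView (L R : ι → F) (AB : (ι → F) × (ι → F)) :
    (ι → F) × (ι → F) × (ι → F) × (ι → F) × (ι → F) :=
  (AB.1, AB.2, fun i => (L i)⁻¹ * AB.1 i, fun i => (L i)⁻¹ * AB.1 i * AB.2 i,
    fun i => R i + (L i)⁻¹ * AB.1 i * AB.2 i)

def reconstructView (L R : ι → F) (VR' : (ι → F) × (ι → F)) :
    (ι → F) × (ι → F) × (ι → F) × (ι → F) × (ι → F) :=
  (fun i => VR'.1 i * L i, fun i => (VR'.1 i)⁻¹ * (VR'.2 i - R i), VR'.1,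
    fun i => VR'.2 i - R i, VR'.2)

/-- The reconstructor's randomness `(V, R')` determined by the refresh randomness `(A, B)`. -/
def seedOfRefresh (L R : ι → F) (AB : (ι → F) × (ι → F)) : (ι → F) × (ι → F) :=
  (fun i => (L i)⁻¹ * AB.1 i, fun i => R i + (L i)⁻¹ * AB.1 i * AB.2 i)

def refreshOfSeed (L R : ι → F) (VR' : (ι → F) × (ι → F)) : (ι → F) × (ι → F) :=
  (fun i => VR'.1 i * L i, fun i => (VR'.1 i)⁻¹ * (VR'.2 i - R i))

variable {L : ι → F} (R : ι → F)

theorem reconstructView_seedOfRefresh (hL : ∀ i, L i ≠ 0) {AB : (ι → F) × (ι → F)}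
    (hA : ∀ i, AB.1 i ≠ 0) :
    reconstructView L R (seedOfRefresh L R AB) = refreshView L R AB := by
  simp only [reconstructView, seedOfRefresh, refreshView, add_sub_cancel_left, Prod.mk.injEq,
    and_true]
  constructor <;> funext i <;> field_simp [hL i, hA i]

theorem bijOn_seedOfRefresh (hL : ∀ i, L i ≠ 0) :
    Set.BijOn (seedOfRefresh L R) {AB | ∀ i, AB.1 i ≠ 0} {VR' | ∀ i, VR'.1 i ≠ 0} := by
  refine Set.InvOn.bijOn (f' := refreshOfSeed L R) ⟨fun AB hA => ?_, fun VR' hV => ?_⟩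
    (fun AB hA i => mul_ne_zero (inv_ne_zero (hL i)) (hA i))
    (fun VR' hV i => mul_ne_zero (hV i) (hL i))
  · ext i <;> simp only [refreshOfSeed, seedOfRefresh, add_sub_cancel_left] <;>
      field_simp [hL i, hA i]
  · ext i <;> simp only [refreshOfSeed, seedOfRefresh] <;> field_simp [hL i, hV i]
    ring

end Refresh

theorem stmt_18_general {F : Type*} [Field F] [Fintype F] [DecidableEq F] {n : ℕ}
    (L R : Fin n → F) (hL : ∀ i, L i ≠ 0)
    (h₁ : ((Finset.univ.filter (fun A : Fin n → F => ∀ i, A i ≠ 0)) ×ˢ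
        (Finset.univ : Finset (Fin n → F))).Nonempty)
    (h₂ : ((Finset.univ.filter (fun V : Fin n → F => ∀ i, V i ≠ 0)) ×ˢ
        (Finset.univ : Finset (Fin n → F))).Nonempty) :
    (PMF.uniformOfFinset
        ((Finset.univ.filter (fun A : Fin n → F => ∀ i, A i ≠ 0)) ×ˢ
          (Finset.univ : Finset (Fin n → F))) h₁).map
        (fun AB =>
          (AB.1, AB.2,
            (fun i => (L i)⁻¹ * AB.1 i : Fin n → F),
            (fun i => ((L i)⁻¹ * AB.1 i) * AB.2 i : Fin n → F),
            (fun i => R i + ((L i)⁻¹ * AB.1 i) * AB.2 i : Fin n → F)))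
      = (PMF.uniformOfFinset
          ((Finset.univ.filter (fun V : Fin n → F => ∀ i, V i ≠ 0)) ×ˢ
            (Finset.univ : Finset (Fin n → F))) h₂).map
          (fun VR' =>
            ((fun i => VR'.1 i * L i : Fin n → F),
              (fun i => (VR'.1 i)⁻¹ * (VR'.2 i - R i) : Fin n → F),
              VR'.1,
              (fun i => VR'.2 i - R i : Fin n → F),
              VR'.2)) := by
  change (PMF.uniformOfFinset _ h₁).map (Refresh.refreshView L R) =
    (PMF.uniformOfFinset _ h₂).map (Refresh.reconstructView L R)
  have hS : (((Finset.univ.filter (fun A : Fin n → F => ∀ i, A i ≠ 0)) ×ˢ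
      (Finset.univ : Finset (Fin n → F)) : Finset _) : Set ((Fin n → F) × (Fin n → F))) =
      {AB | ∀ i, AB.1 i ≠ 0} := by
    ext; simp
  calc _ = ((PMF.uniformOfFinset _ h₁).map (Refresh.seedOfRefresh L R)).map
        (Refresh.reconstructView L R) := by
        rw [PMF.map_comp]
        refine PMF.map_congr_of_mem_support fun AB hAB => ?_
        rw [PMF.support_uniformOfFinset, hS] at hAB
        exact (Refresh.reconstructView_seedOfRefresh R hL hAB).symm
    _ = _ := by
        rw [PMF.map_uniformOfFinset_of_bijOn h₁ h₂ (hS ▸ Refresh.bijOn_seedOfRefresh R hL)]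

/-- the joint distribution of `(A, B, V, X, R')` in the first phase of
the Refresh protocol (where `(A,B)` is uniform on `(F\{0})^n × F^n`, `V i = (L i)⁻¹ * A i`,
`X i = V i * B i`, `R' = R + X`) equals that of the reconstructor (where `R'` is uniform
on `F^n`, `V` is uniform on `(F\{0})^n` independent of `R'`, `A i = V i * L i`,
`X = R' - R`, `B i = (V i)⁻¹ * X i`). -/
theorem stmt_18 {F : Type*} [Field F] [Fintype F] [DecidableEq F] {n : ℕ} (hn : 1 ≤ n)
    (L R : Fin n → F) (hL : ∀ i, L i ≠ 0) (hR : ∀ i, R i ≠ 0)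
    (h₁ : ((Finset.univ.filter (fun A : Fin n → F => ∀ i, A i ≠ 0)) ×ˢ
        (Finset.univ : Finset (Fin n → F))).Nonempty)
    (h₂ : ((Finset.univ.filter (fun V : Fin n → F => ∀ i, V i ≠ 0)) ×ˢ
        (Finset.univ : Finset (Fin n → F))).Nonempty) :
    (PMF.uniformOfFinset
        ((Finset.univ.filter (fun A : Fin n → F => ∀ i, A i ≠ 0)) ×ˢ
          (Finset.univ : Finset (Fin n → F))) h₁).map
        (fun AB =>
          (AB.1, AB.2,
            (fun i => (L i)⁻¹ * AB.1 i : Fin n → F),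
            (fun i => ((L i)⁻¹ * AB.1 i) * AB.2 i : Fin n → F),
            (fun i => R i + ((L i)⁻¹ * AB.1 i) * AB.2 i : Fin n → F)))
      = (PMF.uniformOfFinset
          ((Finset.univ.filter (fun V : Fin n → F => ∀ i, V i ≠ 0)) ×ˢ
            (Finset.univ : Finset (Fin n → F))) h₂).map
          (fun VR' =>
            ((fun i => VR'.1 i * L i : Fin n → F),
              (fun i => (VR'.1 i)⁻¹ * (VR'.2 i - R i) : Fin n → F),
              VR'.1,
              (fun i => VR'.2 i - R i : Fin n → F),
              VR'.2)) :=
  stmt_18_general L R hL h₁ h₂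
end
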